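/- arXiv:1010.0423 — 3 statements merged into one kernel-verified Lean document; each statement's English description precedes it below -/
import Mathlib

section
/- Let (X, φ) be a Morita equivalence between the Busby-Smith twisted actions (A, S, α, u) and (B, S, β, v). Then for all s, t ∈ S the closed span of α_s(_A⟨X_{s*}, X_t⟩) equals A_{st}. -/
/-! ### Right inner-product modules over a C*-algebra -/

/-- A right inner-product `B`-module: a complex vector space `X` with a right
`B`-action and a `B`-valued inner product, linear in the second variable.
Positivity `0 ≤ ⟨x,x⟩_B` is expressed as `⟨x,x⟩_B = c* c` for some `c`,
which is equivalent in a C*-algebra. -/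
structure RightInnerModule (B X : Type*) [CStarAlgebra B]
    [AddCommGroup X] [Module ℂ X] where
  /-- the right action `x · b` -/
  smul : X → B → X
  add_smul' : ∀ x y b, smul (x + y) b = smul x b + smul y b
  smul_add' : ∀ x b c, smul x (b + c) = smul x b + smul x c
  smul_assoc' : ∀ x b c, smul (smul x b) c = smul x (b * c)
  smul_comm_left : ∀ (l : ℂ) x b, smul (l • x) b = l • smul x b
  smul_comm_right : ∀ (l : ℂ) x b, smul x (l • b) = l • smul x b
  /-- the `B`-valued inner product `⟨x, y⟩_B` -/
  inner : X → X → B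
  inner_add_right : ∀ x y z, inner x (y + z) = inner x y + inner x z
  inner_smulC_right : ∀ (l : ℂ) x y, inner x (l • y) = l • inner x y
  inner_smul_right : ∀ x y b, inner x (smul y b) = inner x y * b
  inner_star : ∀ x y, star (inner x y) = inner y x
  inner_self_nonneg : ∀ x, ∃ c, inner x x = star c * c
  inner_self_eq_zero : ∀ x, inner x x = 0 → x = 0

/-- The norm `‖x‖_B = ‖⟨x,x⟩_B‖^(1/2)` on a right inner-product module. -/
noncomputable def RightInnerModule.normX {B X : Type*} [CStarAlgebra B]
    [AddCommGroup X] [Module ℂ X] (m : RightInnerModule B X) (x : X) : ℝ :=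
  Real.sqrt ‖m.inner x x‖

/-! ### Hilbert bimodules -/

/-- A Hilbert `A`–`B` bimodule: an `A`–`B` bimodule which is a left
inner-product `A`-module (inner product `_A⟨·,·⟩`, linear in the first
variable) and a right inner-product `B`-module (inner product `⟨·,·⟩_B`,
linear in the second variable), satisfying the compatibility condition
`_A⟨x,y⟩ · z = x · ⟨y,z⟩_B`. -/
structure HilbertBimodule (A B X : Type*) [CStarAlgebra A] [CStarAlgebra B]
    [AddCommGroup X] [Module ℂ X] where
  /-- the underlying right inner-product `B`-module structure -/
  right : RightInnerModule B X
  /-- the left action `a · x` -/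
  lsmul : A → X → X
  lsmul_add : ∀ a x y, lsmul a (x + y) = lsmul a x + lsmul a y
  add_lsmul : ∀ a b x, lsmul (a + b) x = lsmul a x + lsmul b x
  lsmul_assoc : ∀ a b x, lsmul a (lsmul b x) = lsmul (a * b) x
  lsmul_comm_left : ∀ (l : ℂ) a x, lsmul (l • a) x = l • lsmul a x
  lsmul_comm_right : ∀ (l : ℂ) a x, lsmul a (l • x) = l • lsmul a x
  /-- the `A`-valued inner product `_A⟨x, y⟩` -/
  linner : X → X → A
  linner_add_left : ∀ x y z, linner (x + y) z = linner x z + linner y z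
  linner_smulC_left : ∀ (l : ℂ) x y, linner (l • x) y = l • linner x y
  linner_lsmul_left : ∀ a x y, linner (lsmul a x) y = a * linner x y
  linner_star : ∀ x y, star (linner x y) = linner y x
  linner_self_nonneg : ∀ x, ∃ c, linner x x = c * star c
  linner_self_eq_zero : ∀ x, linner x x = 0 → x = 0
  /-- bimodule condition `a · (x · b) = (a · x) · b` -/
  bimodule : ∀ a x b, right.smul (lsmul a x) b = lsmul a (right.smul x b)
  /-- compatibility `_A⟨x,y⟩ · z = x · ⟨y,z⟩_B` -/
  compat : ∀ x y z, lsmul (linner x y) z = right.smul x (right.inner y z)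

/-! ### Inverse monoids, multipliers and Busby–Smith twisted actions -/

/-- A unital inverse semigroup: a monoid with an involution `star` such that
`s (star s) s = s` and idempotents commute (so `star s` is the unique
generalized inverse of `s`). -/
class InverseMonoid (S : Type*) extends Monoid S, StarMul S where
  mul_star_mul : ∀ s : S, s * star s * s = s
  idem_comm : ∀ e f : S, e * e = e → f * f = f → e * f = f * e

/-- A unitary multiplier of a (closed two-sided) ideal `I` of a C*-algebra `A`,
encoded by the four multiplication maps `l a = u a`, `r a = a u`,
`l' a = u* a`, `r' a = a u*` on `I`. -/
structure UnitaryMultiplier (A : Type*) [CStarAlgebra A] (I : Set A) where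
  l : A → A
  r : A → A
  l' : A → A
  r' : A → A
  maps_mem : ∀ a ∈ I, l a ∈ I ∧ r a ∈ I ∧ l' a ∈ I ∧ r' a ∈ I
  map_add : ∀ a ∈ I, ∀ b ∈ I, l (a + b) = l a + l b ∧ r (a + b) = r a + r b ∧
      l' (a + b) = l' a + l' b ∧ r' (a + b) = r' a + r' b
  map_smul : ∀ (c : ℂ), ∀ a ∈ I, l (c • a) = c • l a ∧ r (c • a) = c • r a ∧
      l' (c • a) = c • l' a ∧ r' (c • a) = c • r' a
  l_mul : ∀ a ∈ I, ∀ b : A, l (a * b) = l a * b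
  l'_mul : ∀ a ∈ I, ∀ b : A, l' (a * b) = l' a * b
  r_mul : ∀ (a : A), ∀ b ∈ I, r (a * b) = a * r b
  r'_mul : ∀ (a : A), ∀ b ∈ I, r' (a * b) = a * r' b
  central : ∀ a ∈ I, ∀ b ∈ I, a * l b = r a * b
  central' : ∀ a ∈ I, ∀ b ∈ I, a * l' b = r' a * b
  star_l : ∀ a ∈ I, star (l a) = r' (star a)
  star_r : ∀ a ∈ I, star (r a) = l' (star a)
  unitary_l : ∀ a ∈ I, l (l' a) = a ∧ l' (l a) = a
  unitary_r : ∀ a ∈ I, r (r' a) = a ∧ r' (r a) = a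

/-- A Busby–Smith twisted action `(β, v)` of a unital inverse semigroup `S` on
a C*-algebra `A`: closed two-sided ideals `A_s`, partial automorphisms
`β_s : A_{s*} → A_s`, and unitary multipliers `v_{s,t}` of `A_{st}`,
satisfying `A_1 = A`, `β_s β_t = Ad v_{s,t} ∘ β_{st}`, triviality of `v_{s,t}`
when `s` or `t` is idempotent, and the cocycle identity. -/
structure TwistedAction (S A : Type*) [InverseMonoid S] [CStarAlgebra A] where
  /-- the ideal `A_s` -/
  ideal : S → Set A
  ideal_submodule : ∀ s, ∃ J : Submodule ℂ A, (J : Set A) = ideal s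
  ideal_closed : ∀ s, IsClosed (ideal s)
  ideal_mul_left : ∀ s (a : A), ∀ b ∈ ideal s, a * b ∈ ideal s
  ideal_mul_right : ∀ s (b : A), ∀ a ∈ ideal s, a * b ∈ ideal s
  ideal_one : ideal 1 = Set.univ
  /-- the partial automorphism `β_s : A_{s*} → A_s` -/
  β : S → A → A
  β_bij : ∀ s, Set.BijOn (β s) (ideal (star s)) (ideal s)
  β_add : ∀ s, ∀ a ∈ ideal (star s), ∀ b ∈ ideal (star s), β s (a + b) = β s a + β s b
  β_smul : ∀ s (c : ℂ), ∀ a ∈ ideal (star s), β s (c • a) = c • β s a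
  β_mul : ∀ s, ∀ a ∈ ideal (star s), ∀ b ∈ ideal (star s), β s (a * b) = β s a * β s b
  β_star : ∀ s, ∀ a ∈ ideal (star s), β s (star a) = star (β s a)
  /-- the unitary multiplier `v_{s,t}` of `A_{st}` -/
  v : (s t : S) → UnitaryMultiplier A (ideal (s * t))
  /-- `v_{s,t} = 1` if `s` or `t` is idempotent -/
  v_idem : ∀ s t : S, (s * s = s ∨ t * t = t) →
      ∀ a ∈ ideal (s * t), (v s t).l a = a ∧ (v s t).r a = a
  /-- `β_s β_t = Ad v_{s,t} ∘ β_{st}` (including equality of domains) -/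
  β_comp_mem : ∀ s t : S, ∀ a ∈ ideal (star t),
      (β t a ∈ ideal (star s) ↔ a ∈ ideal (star (s * t)))
  β_comp_dom : ∀ s t : S, ∀ a ∈ ideal (star (s * t)), a ∈ ideal (star t)
  β_comp : ∀ s t : S, ∀ a ∈ ideal (star (s * t)),
      β s (β t a) = (v s t).l ((v s t).r' (β (s * t) a))
  /-- cocycle identity: `β_r(a v_{s,t}) v_{r,st} = β_r(a) v_{r,s} v_{rs,t}`
  for `a ∈ A_{r*}A_{st}` (note `A_{r*}A_{st} = A_{r*} ∩ A_{st}`) -/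
  cocycle : ∀ r s t : S, ∀ a ∈ ideal (star r) ∩ ideal (s * t),
      (v r (s * t)).r (β r ((v s t).r a)) = (v (r * s) t).r ((v r s).r (β r a))
  /-- `β_s(A_{s*}A_t) = A_{st}` (see [Si2]) -/
  β_ideal_img : ∀ s t : S, β s '' (ideal (star s) ∩ ideal t) = ideal (s * t)

/-! ### Morita equivalence of Busby–Smith twisted actions -/

/-- A Morita equivalence `(X, φ)` between Busby–Smith twisted actions
`(A, S, α, u)` and `(B, S, β, v)`: an `A`–`B` imprimitivity bimodule `X`
together with partial automorphisms `(α_s, φ_s, β_s)` of `X`,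
`φ_s : X_{s*} → X_s` where `X_s := A_s·X = X·B_s`, satisfying
`φ_s φ_t = u_{s,t} · φ_{st}(·) · v_{s,t}*`.  The actions of the multipliers
`u_{s,t}` (on the left) and `v_{s,t}*` (on the right) on `X_{st}` are encoded
by the maps `uact` and `vact'`. -/
structure TwistedMoritaEquivalence (S : Type*) [InverseMonoid S] {A B : Type*}
    [CStarAlgebra A] [CStarAlgebra B]
    (TA : TwistedAction S A) (TB : TwistedAction S B)
    (X : Type*) [NormedAddCommGroup X] [NormedSpace ℂ X] [CompleteSpace X] where
  /-- the underlying Hilbert `A`–`B` bimodule structure -/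
  bim : HilbertBimodule A B X
  /-- the norm of `X` is the Hilbert module norm (so `X` is complete) -/
  norm_right : ∀ x : X, ‖x‖ = Real.sqrt ‖bim.right.inner x x‖
  /-- `X` is full on the left -/
  full_left : (Submodule.span ℂ {a : A | ∃ x y : X, a = bim.linner x y}).topologicalClosure = ⊤
  /-- `X` is full on the right -/
  full_right : (Submodule.span ℂ {b : B | ∃ x y : X, b = bim.right.inner x y}).topologicalClosure = ⊤
  /-- the subbimodule `X_s` -/
  Xs : S → Set X
  Xs_left : ∀ s, Xs s = {z : X | ∃ a ∈ TA.ideal s, ∃ x : X, z = bim.lsmul a x}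
  Xs_right : ∀ s, Xs s = {z : X | ∃ b ∈ TB.ideal s, ∃ x : X, z = bim.right.smul x b}
  /-- the partial automorphism `φ_s : X_{s*} → X_s` -/
  φ : S → X → X
  φ_bij : ∀ s, Set.BijOn (φ s) (Xs (star s)) (Xs s)
  φ_add : ∀ s, ∀ x ∈ Xs (star s), ∀ y ∈ Xs (star s), φ s (x + y) = φ s x + φ s y
  φ_smulC : ∀ s (c : ℂ), ∀ x ∈ Xs (star s), φ s (c • x) = c • φ s x
  φ_lsmul : ∀ s, ∀ a ∈ TA.ideal (star s), ∀ x ∈ Xs (star s),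
      φ s (bim.lsmul a x) = bim.lsmul (TA.β s a) (φ s x)
  φ_rsmul : ∀ s, ∀ b ∈ TB.ideal (star s), ∀ x ∈ Xs (star s),
      φ s (bim.right.smul x b) = bim.right.smul (φ s x) (TB.β s b)
  φ_linner : ∀ s, ∀ x ∈ Xs (star s), ∀ y ∈ Xs (star s),
      TA.β s (bim.linner x y) = bim.linner (φ s x) (φ s y)
  φ_rinner : ∀ s, ∀ x ∈ Xs (star s), ∀ y ∈ Xs (star s),
      TB.β s (bim.right.inner x y) = bim.right.inner (φ s x) (φ s y)
  /-- left action of the multiplier `u_{s,t}` on `X_{st} = A_{st}·X` -/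
  uact : S → S → X → X
  uact_spec : ∀ s t, ∀ a ∈ TA.ideal (s * t), ∀ x : X,
      uact s t (bim.lsmul a x) = bim.lsmul ((TA.v s t).l a) x
  /-- right action of the multiplier `v_{s,t}*` on `X_{st} = X·B_{st}` -/
  vact' : S → S → X → X
  vact'_spec : ∀ s t, ∀ b ∈ TB.ideal (s * t), ∀ x : X,
      vact' s t (bim.right.smul x b) = bim.right.smul x ((TB.v s t).r' b)
  /-- `φ_s φ_t = u_{s,t} · φ_{st}(·) · v_{s,t}*` (with matching domains) -/
  comp_mem : ∀ s t : S, ∀ x ∈ Xs (star t), (φ t x ∈ Xs (star s) ↔ x ∈ Xs (star (s * t)))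
  comp_dom : ∀ s t : S, ∀ x ∈ Xs (star (s * t)), x ∈ Xs (star t)
  comp : ∀ s t : S, ∀ x ∈ Xs (star (s * t)),
      φ s (φ t x) = uact s t (vact' s t (φ (s * t) x))

/-!
Write `α_s` for `TA.β s`. Since `_A⟨X_{s*}, X_t⟩ ⊆ A_{s*} ∩ A_t` and `α_s(A_{s*} ∩ A_t) = A_{st}`,
one inclusion is immediate. Conversely let `a ∈ A_{s*} ∩ A_t`. Functional calculus gives
`a = lim a d (a*a)` with `d = (a*a + δ)⁻¹`, fullness of `X` makes every `d ∈ A` a limit of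
sums of `_A⟨x, y⟩`, and `a _A⟨x, y⟩ (a*a) = _A⟨a·x, (a*a)·y⟩` with `a·x ∈ X_{s*}`,
`(a*a)·y ∈ X_t`. Finally `α_s` is a *-homomorphism on the C*-algebra `A_{s*}` (closed ideals
are self-adjoint, by the same approximation applied to `a*`), hence contractive, so it carries
these approximations to `α_s(a)`.
-/

namespace CStarAlgebra

variable {A : Type*} [CStarAlgebra A]

lemma continuousOn_inv_add_spectrum_star_mul_self (a : A) {δ : ℝ} (hδ : 0 < δ) :
    ContinuousOn (fun x : ℝ => (x + δ)⁻¹) (spectrum ℝ (star a * a)) :=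
  (continuousOn_id.add continuousOn_const).inv₀ fun x hx =>
    (add_pos_of_nonneg_of_pos (spectrum_star_mul_self_nonneg x hx) hδ).ne'

lemma cfc_inv_add_mul_add_smul (a : A) {δ : ℝ} (hδ : 0 < δ) :
    cfc (fun x : ℝ => (x + δ)⁻¹) (star a * a) * (star a * a)
      + δ • cfc (fun x : ℝ => (x + δ)⁻¹) (star a * a) = 1 := by
  have hr := continuousOn_inv_add_spectrum_star_mul_self a hδ
  have h : cfc (fun x : ℝ => (x + δ)⁻¹ * x + δ * (x + δ)⁻¹) (star a * a) = 1 := by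
    rw [← cfc_const_one ℝ (star a * a)]
    refine cfc_congr fun x hx => ?_
    have hxδ : x + δ ≠ 0 :=
      (add_pos_of_nonneg_of_pos (spectrum_star_mul_self_nonneg x hx) hδ).ne'
    field_simp
  rwa [cfc_add (star a * a) (fun x : ℝ => (x + δ)⁻¹ * x) (fun x : ℝ => δ * (x + δ)⁻¹)
      (hr.mul continuousOn_id) (continuousOn_const.mul hr),
    cfc_mul (fun x : ℝ => (x + δ)⁻¹) (fun x : ℝ => x) (star a * a) hr continuousOn_id,
    cfc_const_mul δ (fun x : ℝ => (x + δ)⁻¹) (star a * a) hr, cfc_id' ℝ (star a * a)] at h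

lemma norm_mul_cfc_inv_add_sq_le (a : A) {δ : ℝ} (hδ : 0 < δ) :
    ‖a * cfc (fun x : ℝ => (x + δ)⁻¹) (star a * a)‖ ^ 2 ≤ δ⁻¹ := by
  have hr := continuousOn_inv_add_spectrum_star_mul_self a hδ
  have hr_sa : IsSelfAdjoint (cfc (fun x : ℝ => (x + δ)⁻¹) (star a * a)) := cfc_predicate _ _
  have h : cfc (fun x : ℝ => (x + δ)⁻¹ * x * (x + δ)⁻¹) (star a * a)
      = star (a * cfc (fun x : ℝ => (x + δ)⁻¹) (star a * a))
        * (a * cfc (fun x : ℝ => (x + δ)⁻¹) (star a * a)) := by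
    rw [cfc_mul (fun x : ℝ => (x + δ)⁻¹ * x) (fun x : ℝ => (x + δ)⁻¹) (star a * a)
        (hr.mul continuousOn_id) hr,
      cfc_mul (fun x : ℝ => (x + δ)⁻¹) (fun x : ℝ => x) (star a * a) hr continuousOn_id,
      cfc_id' ℝ (star a * a), star_mul, hr_sa.star_eq]
    noncomm_ring
  rw [sq, ← CStarRing.norm_star_mul_self, ← h]
  refine norm_cfc_le (inv_nonneg.mpr hδ.le) fun x hx => ?_
  have hx0 := spectrum_star_mul_self_nonneg x hx
  rw [Real.norm_of_nonneg (by positivity),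
    show (x + δ)⁻¹ * x * (x + δ)⁻¹ = x / (x + δ) ^ 2 by field_simp, ← one_div,
    div_le_div_iff₀ (by positivity) hδ]
  nlinarith

lemma exists_norm_sub_mul_mul_star_mul_lt (a : A) {ε : ℝ} (hε : 0 < ε) :
    ∃ d : A, ‖a - a * d * (star a * a)‖ < ε := by
  set δ := ε ^ 2 / 2
  have hδ : 0 < δ := by positivity
  set r := cfc (fun x : ℝ => (x + δ)⁻¹) (star a * a)
  refine ⟨r, ?_⟩
  have hsub : a - a * r * (star a * a) = δ • (a * r) := by
    have h1 : 1 - r * (star a * a) = δ • r := by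
      rw [← cfc_inv_add_mul_add_smul a hδ, add_sub_cancel_left]
    rw [← mul_smul_comm, ← h1, mul_sub, mul_one, mul_assoc]
  refine lt_of_pow_lt_pow_left₀ 2 hε.le ?_
  rw [hsub, norm_smul, mul_pow, Real.norm_of_nonneg hδ.le]
  calc δ ^ 2 * ‖a * r‖ ^ 2 ≤ δ ^ 2 * δ⁻¹ := by gcongr; exact norm_mul_cfc_inv_add_sq_le a hδ
    _ = δ := by field_simp
    _ < ε ^ 2 := by simp only [δ]; linarith [sq_pos_of_pos hε]

lemma star_mem_of_isClosed {I : Set A} (hI : IsClosed I) (hmul_left : ∀ x, ∀ y ∈ I, x * y ∈ I)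
    (hmul_right : ∀ y, ∀ x ∈ I, x * y ∈ I) {a : A} (ha : a ∈ I) : star a ∈ I := by
  refine hI.closure_subset (Metric.mem_closure_iff.mpr fun ε hε => ?_)
  obtain ⟨d, hd⟩ := exists_norm_sub_mul_mul_star_mul_lt a hε
  refine ⟨star a * a * star d * star a,
    hmul_right _ _ (hmul_right _ _ (hmul_left _ _ ha)), ?_⟩
  rwa [dist_eq_norm, ← norm_star, star_sub, star_star, star_mul, star_mul, star_star, star_star,
    (IsSelfAdjoint.star_mul_self a).star_eq, ← mul_assoc]

end CStarAlgebra

namespace TwistedAction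

variable {S A : Type*} [InverseMonoid S] [CStarAlgebra A] (TA : TwistedAction S A)

noncomputable def idealSubmodule (s : S) : Submodule ℂ A :=
  (TA.ideal_submodule s).choose.copy (TA.ideal s) (TA.ideal_submodule s).choose_spec.symm

lemma star_mem_ideal {s : S} {a : A} (ha : a ∈ TA.ideal s) : star a ∈ TA.ideal s :=
  CStarAlgebra.star_mem_of_isClosed (TA.ideal_closed s) (TA.ideal_mul_left s)
    (TA.ideal_mul_right s) ha

noncomputable def idealSubalgebra (s : S) : NonUnitalStarSubalgebra ℂ A :=
  { TA.idealSubmodule s with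
    mul_mem' := fun {a b} _ hb => TA.ideal_mul_left s a b hb
    star_mem' := TA.star_mem_ideal }

instance isClosed_idealSubalgebra (s : S) : IsClosed (TA.idealSubalgebra s : Set A) :=
  TA.ideal_closed s

noncomputable def βHom (s : S) : TA.idealSubalgebra (star s) →⋆ₙₐ[ℂ] A where
  toFun a := TA.β s a
  map_smul' c a := TA.β_smul s c a a.2
  map_zero' := by
    have h0 := (0 : TA.idealSubalgebra (star s)).2
    simpa using TA.β_add s 0 h0 0 h0
  map_add' a b := TA.β_add s a a.2 b b.2
  map_mul' a b := TA.β_mul s a a.2 b b.2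
  map_star' a := TA.β_star s a a.2

lemma norm_β_le {s : S} {a : A} (ha : a ∈ TA.ideal (star s)) : ‖TA.β s a‖ ≤ ‖a‖ :=
  NonUnitalStarAlgHom.norm_apply_le (TA.βHom s) (⟨a, ha⟩ : TA.idealSubalgebra (star s))

lemma dist_β_le {s : S} {a b : A} (ha : a ∈ TA.ideal (star s)) (hb : b ∈ TA.ideal (star s)) :
    dist (TA.β s a) (TA.β s b) ≤ dist a b := by
  have h := NonUnitalStarAlgHom.norm_apply_le (TA.βHom s)
    ((⟨a, ha⟩ : TA.idealSubalgebra (star s)) - ⟨b, hb⟩)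
  rw [map_sub] at h
  rwa [dist_eq_norm, dist_eq_norm]

lemma mul_mul_mem_ideal {s : S} {p : A} (hp : p ∈ TA.ideal s) (d q : A) :
    p * d * q ∈ TA.ideal s :=
  TA.ideal_mul_right s q _ (TA.ideal_mul_right s d p hp)

noncomputable def βSandwich (s : S) {p : A} (hp : p ∈ TA.ideal (star s)) (q : A) : A →L[ℂ] A :=
  LinearMap.mkContinuous
    { toFun := fun d => TA.β s (p * d * q)
      map_add' := fun d d' => by
        rw [mul_add, add_mul, TA.β_add s _ (TA.mul_mul_mem_ideal hp d q) _
          (TA.mul_mul_mem_ideal hp d' q)]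
      map_smul' := fun c d => by
        rw [mul_smul_comm, smul_mul_assoc, TA.β_smul s c _ (TA.mul_mul_mem_ideal hp d q)]
        rfl }
    (‖p‖ * ‖q‖) fun d => by
      calc ‖TA.β s (p * d * q)‖ ≤ ‖p * d * q‖ := TA.norm_β_le (TA.mul_mul_mem_ideal hp d q)
        _ ≤ ‖p‖ * ‖d‖ * ‖q‖ := norm_mul₃_le
        _ = ‖p‖ * ‖q‖ * ‖d‖ := by ring

lemma βSandwich_apply (s : S) {p : A} (hp : p ∈ TA.ideal (star s)) (q d : A) :
    TA.βSandwich s hp q d = TA.β s (p * d * q) := rfl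

end TwistedAction

lemma HilbertBimodule.linner_lsmul_right {A B X : Type*} [CStarAlgebra A] [CStarAlgebra B]
    [AddCommGroup X] [Module ℂ X] (m : HilbertBimodule A B X) (x y : X) (a : A) :
    m.linner x (m.lsmul a y) = m.linner x y * star a := by
  rw [← m.linner_star (m.lsmul a y), m.linner_lsmul_left, star_mul, m.linner_star]

namespace TwistedMoritaEquivalence

variable {S A B : Type*} [InverseMonoid S] [CStarAlgebra A] [CStarAlgebra B]
    {TA : TwistedAction S A} {TB : TwistedAction S B}
    {X : Type*} [NormedAddCommGroup X] [NormedSpace ℂ X] [CompleteSpace X]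
    (M : TwistedMoritaEquivalence S TA TB X)

def βLinnerSet (s t : S) : Set A :=
  {a : A | ∃ x ∈ M.Xs (star s), ∃ y ∈ M.Xs t, a = TA.β s (M.bim.linner x y)}

lemma lsmul_mem_Xs {s : S} {a : A} (ha : a ∈ TA.ideal s) (x : X) :
    M.bim.lsmul a x ∈ M.Xs s := by
  rw [M.Xs_left]
  exact ⟨a, ha, x, rfl⟩

lemma linner_mem_ideal_left {s : S} {x : X} (hx : x ∈ M.Xs s) (y : X) :
    M.bim.linner x y ∈ TA.ideal s := by
  rw [M.Xs_left] at hx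
  obtain ⟨a, ha, w, rfl⟩ := hx
  rw [M.bim.linner_lsmul_left]
  exact TA.ideal_mul_right s _ a ha

lemma linner_mem_ideal_right {s : S} {y : X} (hy : y ∈ M.Xs s) (x : X) :
    M.bim.linner x y ∈ TA.ideal s := by
  rw [M.Xs_left] at hy
  obtain ⟨a, ha, w, rfl⟩ := hy
  rw [M.bim.linner_lsmul_right]
  exact TA.ideal_mul_left s _ _ (TA.star_mem_ideal ha)

lemma closure_span_βLinnerSet_subset (s t : S) :
    ((Submodule.span ℂ (M.βLinnerSet s t)).topologicalClosure : Set A) ⊆ TA.ideal (s * t) := by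
  have hspan : Submodule.span ℂ (M.βLinnerSet s t) ≤ TA.idealSubmodule (s * t) := by
    refine Submodule.span_le.mpr ?_
    rintro _ ⟨x, hx, y, hy, rfl⟩
    change _ ∈ TA.ideal (s * t)
    rw [← TA.β_ideal_img s t]
    exact ⟨_, ⟨M.linner_mem_ideal_left hx y, M.linner_mem_ideal_right hy x⟩, rfl⟩
  rw [Submodule.topologicalClosure_coe]
  exact closure_minimal hspan (TA.ideal_closed (s * t))

lemma βSandwich_mem_closure_span {s t : S} {p q : A} (hp : p ∈ TA.ideal (star s))
    (hq : q ∈ TA.ideal t) (d : A) :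
    TA.βSandwich s hp (star q) d ∈ (Submodule.span ℂ (M.βLinnerSet s t)).topologicalClosure := by
  set G := Submodule.span ℂ {a : A | ∃ x y : X, a = M.bim.linner x y}
  have hd : d ∈ G.topologicalClosure := by
    rw [M.full_left]
    trivial
  have hgen : G.map (TA.βSandwich s hp (star q) : A →ₗ[ℂ] A)
      ≤ Submodule.span ℂ (M.βLinnerSet s t) := by
    refine (Submodule.map_span_le _ _ _).mpr ?_
    rintro _ ⟨x, y, rfl⟩
    refine Submodule.subset_span ⟨M.bim.lsmul p x, M.lsmul_mem_Xs hp x,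
      M.bim.lsmul q y, M.lsmul_mem_Xs hq y, ?_⟩
    rw [ContinuousLinearMap.coe_coe, TwistedAction.βSandwich_apply, M.bim.linner_lsmul_left,
      M.bim.linner_lsmul_right, mul_assoc]
  exact Submodule.topologicalClosure_mono hgen
    (Submodule.topologicalClosure_map (TA.βSandwich s hp (star q)) _ ⟨d, hd, rfl⟩)

lemma β_mem_closure_span_βLinnerSet {s t : S} {a : A} (has : a ∈ TA.ideal (star s))
    (hat : a ∈ TA.ideal t) :
    TA.β s a ∈ (Submodule.span ℂ (M.βLinnerSet s t)).topologicalClosure := by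
  rw [← SetLike.mem_coe, ← (Submodule.isClosed_topologicalClosure _).closure_eq,
    Metric.mem_closure_iff]
  intro ε hε
  obtain ⟨d, hd⟩ := CStarAlgebra.exists_norm_sub_mul_mul_star_mul_lt a hε
  have hq : star a * a ∈ TA.ideal t := TA.ideal_mul_left t (star a) a hat
  refine ⟨_, M.βSandwich_mem_closure_span has hq d, ?_⟩
  rw [TwistedAction.βSandwich_apply, (IsSelfAdjoint.star_mul_self a).star_eq]
  calc dist (TA.β s a) (TA.β s (a * d * (star a * a)))
      ≤ dist a (a * d * (star a * a)) := TA.dist_β_le has (TA.mul_mul_mem_ideal has d _)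
    _ < ε := by rwa [dist_eq_norm]

end TwistedMoritaEquivalence

/-- If `(X, φ)` is a Morita equivalence between Busby–Smith twisted actions,
then the closed span of `α_s(_A⟨X_{s*}, X_t⟩)` equals `A_{st}`. -/
theorem morita_linner_span {S A B : Type*} [InverseMonoid S]
    [CStarAlgebra A] [CStarAlgebra B]
    {TA : TwistedAction S A} {TB : TwistedAction S B}
    {X : Type*} [NormedAddCommGroup X] [NormedSpace ℂ X] [CompleteSpace X]
    (M : TwistedMoritaEquivalence S TA TB X) (s t : S) :
    ((Submodule.span ℂ {a : A | ∃ x ∈ M.Xs (star s), ∃ y ∈ M.Xs t,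
        a = TA.β s (M.bim.linner x y)}).topologicalClosure : Set A)
      = TA.ideal (s * t) := by
  refine (M.closure_span_βLinnerSet_subset s t).antisymm ?_
  rw [← TA.β_ideal_img s t]
  rintro _ ⟨a, ⟨has, hat⟩, rfl⟩
  exact M.β_mem_closure_span_βLinnerSet has hat
end

section
/- If two Busby-Smith twisted actions (A, S, α, u) and (A, S, β, w) of a unital inverse semigroup S on the same C*-algebra A are exterior equivalent via unitary multipliers V_s, then they are Morita equivalent: the maps φ_s(a) = α_s(a)V_s* on the standard A–A imprimitivity bimodule implement a Morita equivalence. -/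
/-! ### Morita equivalence of Busby–Smith twisted actions -/

/-- A Morita equivalence `(X, φ)` between Busby–Smith twisted actions
`(A, S, α, u)` and `(B, S, β, v)`: an `A`–`B` imprimitivity bimodule `X`
together with partial automorphisms `(α_s, φ_s, β_s)` of `X`,
`φ_s : X_{s*} → X_s` where `X_s := A_s·X = X·B_s`, satisfying
`φ_s φ_t = u_{s,t} · φ_{st}(·) · v_{s,t}*`.  The actions of the multipliers
`u_{s,t}` (on the left) and `v_{s,t}*` (on the right) on `X_{st}` are encoded
by the maps `uact` and `vact'`. -/
structure BSMoritaEquivalence (S : Type*) [InverseMonoid S] {A B : Type*}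
    [CStarAlgebra A] [CStarAlgebra B]
    (TA : TwistedAction S A) (TB : TwistedAction S B)
    (X : Type*) [NormedAddCommGroup X] [NormedSpace ℂ X] [CompleteSpace X] where
  /-- the underlying Hilbert `A`–`B` bimodule structure -/
  bim : HilbertBimodule A B X
  /-- the norm of `X` is the Hilbert module norm (so `X` is complete) -/
  norm_right : ∀ x : X, ‖x‖ = Real.sqrt ‖bim.right.inner x x‖
  /-- `X` is full on the left -/
  full_left : (Submodule.span ℂ {a : A | ∃ x y : X, a = bim.linner x y}).topologicalClosure = ⊤
  /-- `X` is full on the right -/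
  full_right : (Submodule.span ℂ {b : B | ∃ x y : X, b = bim.right.inner x y}).topologicalClosure = ⊤
  /-- the subbimodule `X_s` -/
  Xs : S → Set X
  Xs_left : ∀ s, Xs s = {z : X | ∃ a ∈ TA.ideal s, ∃ x : X, z = bim.lsmul a x}
  Xs_right : ∀ s, Xs s = {z : X | ∃ b ∈ TB.ideal s, ∃ x : X, z = bim.right.smul x b}
  /-- the partial automorphism `φ_s : X_{s*} → X_s` -/
  φ : S → X → X
  φ_bij : ∀ s, Set.BijOn (φ s) (Xs (star s)) (Xs s)
  φ_add : ∀ s, ∀ x ∈ Xs (star s), ∀ y ∈ Xs (star s), φ s (x + y) = φ s x + φ s y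
  φ_smulC : ∀ s (c : ℂ), ∀ x ∈ Xs (star s), φ s (c • x) = c • φ s x
  φ_lsmul : ∀ s, ∀ a ∈ TA.ideal (star s), ∀ x ∈ Xs (star s),
      φ s (bim.lsmul a x) = bim.lsmul (TA.β s a) (φ s x)
  φ_rsmul : ∀ s, ∀ b ∈ TB.ideal (star s), ∀ x ∈ Xs (star s),
      φ s (bim.right.smul x b) = bim.right.smul (φ s x) (TB.β s b)
  φ_linner : ∀ s, ∀ x ∈ Xs (star s), ∀ y ∈ Xs (star s),
      TA.β s (bim.linner x y) = bim.linner (φ s x) (φ s y)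
  φ_rinner : ∀ s, ∀ x ∈ Xs (star s), ∀ y ∈ Xs (star s),
      TB.β s (bim.right.inner x y) = bim.right.inner (φ s x) (φ s y)
  /-- left action of the multiplier `u_{s,t}` on `X_{st} = A_{st}·X` -/
  uact : S → S → X → X
  uact_spec : ∀ s t, ∀ a ∈ TA.ideal (s * t), ∀ x : X,
      uact s t (bim.lsmul a x) = bim.lsmul ((TA.v s t).l a) x
  /-- right action of the multiplier `v_{s,t}*` on `X_{st} = X·B_{st}` -/
  vact' : S → S → X → X
  vact'_spec : ∀ s t, ∀ b ∈ TB.ideal (s * t), ∀ x : X,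
      vact' s t (bim.right.smul x b) = bim.right.smul x ((TB.v s t).r' b)
  /-- `φ_s φ_t = u_{s,t} · φ_{st}(·) · v_{s,t}*` (with matching domains) -/
  comp_mem : ∀ s t : S, ∀ x ∈ Xs (star t), (φ t x ∈ Xs (star s) ↔ x ∈ Xs (star (s * t)))
  comp_dom : ∀ s t : S, ∀ x ∈ Xs (star (s * t)), x ∈ Xs (star t)
  comp : ∀ s t : S, ∀ x ∈ Xs (star (s * t)),
      φ s (φ t x) = uact s t (vact' s t (φ (s * t) x))

/-- An exterior equivalence between two Busby–Smith twisted actions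
`(α, u)` and `(β, w)` of `S` on the same C*-algebra `A`: unitary multipliers
`V_s` of `A_s` with `β_s = Ad V_s ∘ α_s` and
`w_{s,t} = V_s α_s(1·V_t) u_{s,t} V_{st}*`.  The multiplier `α_s(1·V_t)` of
`A_s` is encoded by its left multiplication map `mV s t`. -/
structure ExteriorEquivalence (S A : Type*) [InverseMonoid S] [CStarAlgebra A]
    (TA TB : TwistedAction S A) where
  ideal_eq : ∀ s, TB.ideal s = TA.ideal s
  /-- the unitary multiplier `V_s` of `A_s` -/
  V : (s : S) → UnitaryMultiplier A (TA.ideal s)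
  /-- `β_s = Ad V_s ∘ α_s` -/
  beta_eq : ∀ s, ∀ a ∈ TA.ideal (star s), TB.β s a = (V s).l ((V s).r' (TA.β s a))
  /-- left multiplication by the multiplier `α_s(1_{M(A_{s*})} V_t)` of `A_s` -/
  mV : S → S → A → A
  mV_spec : ∀ s t, ∀ a ∈ TA.ideal (star s) ∩ TA.ideal t,
      mV s t (TA.β s a) = TA.β s ((V t).l a)
  mV_mem : ∀ s t, ∀ a ∈ TA.ideal s, mV s t a ∈ TA.ideal s
  mV_add : ∀ s t, ∀ a ∈ TA.ideal s, ∀ b ∈ TA.ideal s, mV s t (a + b) = mV s t a + mV s t b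
  mV_mod : ∀ s t, ∀ a ∈ TA.ideal s, ∀ b : A, mV s t (a * b) = mV s t a * b
  /-- `w_{s,t} = V_s α_s(1·V_t) u_{s,t} V_{st}*`, as left multiplication
  maps on `A_{st}` -/
  w_eq : ∀ s t, ∀ c ∈ TA.ideal (s * t),
      (TB.v s t).l c = (V s).l (mV s t ((TA.v s t).l ((V (s * t)).l' c)))

/-! The maps `φ_s(a) = α_s(a) V_s*` intertwine the standard bimodule structure of `A` with `α` on
the left and `β = Ad V ∘ α` on the right: each bimodule and inner-product identity is a one-line
multiplier computation, and `φ_s φ_t = u_{s,t} φ_{st}(·) w_{s,t}*` is a rearrangement of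
`w_{s,t} = V_s α_s(V_t) u_{s,t} V_{st}*`. The one analytic input is that a closed ideal `J` of a
C*-algebra contains `x` as soon as it contains `x* x`; this makes closed ideals self-adjoint and
lets the multipliers `V_s`, `u_{s,t}` act on intersections of the ideals `A_r`. -/

structure IsClosedIdeal {A : Type*} [Ring A] [TopologicalSpace A] (J : Set A) : Prop where
  isClosed : IsClosed J
  sub_mem : ∀ a ∈ J, ∀ b ∈ J, a - b ∈ J
  mul_mem_left : ∀ (a : A), ∀ b ∈ J, a * b ∈ J
  mul_mem_right : ∀ (b : A), ∀ a ∈ J, a * b ∈ J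

theorem abs_div_one_add_sq_sq_le {m : ℝ} (hm : 0 < m) (t : ℝ) :
    |t / (1 + m ^ 2 * t ^ 2) ^ 2| ≤ m⁻¹ := by
  have hd : 1 ≤ 1 + m ^ 2 * t ^ 2 := by nlinarith [sq_nonneg (m * t)]
  have h1 : m * |t| ≤ 1 + m ^ 2 * t ^ 2 := by
    nlinarith [sq_abs t, sq_nonneg (m * |t| - 1), abs_nonneg t]
  rw [abs_div, abs_of_pos (a := (1 + m ^ 2 * t ^ 2) ^ 2) (by positivity),
    div_le_iff₀ (by positivity), inv_mul_eq_div, le_div_iff₀ hm]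
  nlinarith

section CStarAlgebra

variable {A : Type*} [CStarAlgebra A]

/-- With `h = x* x` and `e = (1 + m² h²)⁻¹`, one has `x - x e ∈ x h A` and
`‖x e‖² = ‖e h e‖ ≤ sup_t |t| / (1 + m² t²)² ≤ 1 / m`. -/
theorem exists_norm_sub_mul_star_mul_self_mul_lt (x : A) {ε : ℝ} (hε : 0 < ε) :
    ∃ c : A, ‖x - x * (star x * x) * c‖ < ε := by
  obtain ⟨m, hm⟩ := exists_nat_gt (ε ^ 2)⁻¹
  have hm0 : (0 : ℝ) < m := lt_trans (by positivity) hm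
  set d : ℝ → ℝ := fun t => 1 + (m : ℝ) ^ 2 * t ^ 2
  have hd : ∀ t, d t ≠ 0 := fun t => by positivity
  have hdi : Continuous fun t => (d t)⁻¹ := by fun_prop (disch := exact hd _)
  have hc : Continuous fun t => (m : ℝ) ^ 2 * t * (d t)⁻¹ := by fun_prop (disch := exact hd _)
  set h := star x * x
  set e := cfc (fun t => (d t)⁻¹) h
  have one_sub_eq : 1 - h * cfc (fun t => (m : ℝ) ^ 2 * t * (d t)⁻¹) h = e := by
    have : cfc (fun t => 1 - t * ((m : ℝ) ^ 2 * t * (d t)⁻¹)) h = e :=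
      cfc_congr fun t _ => by field_simp [hd t]; simp only [d]; ring
    rwa [cfc_sub (fun _ => 1) (fun t => t * ((m : ℝ) ^ 2 * t * (d t)⁻¹)) h continuousOn_const
        (by fun_prop), cfc_const_one ℝ h,
      cfc_mul (fun t => t) _ h continuousOn_id hc.continuousOn, cfc_id' ℝ h] at this
  have norm_sq_le : ‖x * e‖ ^ 2 ≤ (m : ℝ)⁻¹ := by
    have star_mul_eq : star (x * e) * (x * e) = cfc (fun t : ℝ => t / d t ^ 2) h := by
      have : cfc (fun t : ℝ => (d t)⁻¹ * t * (d t)⁻¹) h = cfc (fun t : ℝ => t / d t ^ 2) h :=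
        cfc_congr fun t _ => by field_simp [hd t]
      rw [cfc_mul (fun t => (d t)⁻¹ * t) (fun t => (d t)⁻¹) h
          (hdi.mul continuous_id).continuousOn hdi.continuousOn,
        cfc_mul (fun t => (d t)⁻¹) (fun t => t) h hdi.continuousOn continuousOn_id,
        cfc_id' ℝ h] at this
      rw [star_mul, (cfc_predicate _ h : IsSelfAdjoint e).star_eq, ← this]
      simp only [h, e, mul_assoc]
    rw [sq, ← CStarRing.norm_star_mul_self, star_mul_eq]
    exact norm_cfc_le (by positivity) fun t _ => abs_div_one_add_sq_sq_le hm0 t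
  refine ⟨cfc (fun t => (m : ℝ) ^ 2 * t * (d t)⁻¹) h, ?_⟩
  rw [mul_assoc, ← mul_one x, mul_assoc, ← mul_sub, one_mul, one_sub_eq]
  have : (m : ℝ)⁻¹ < ε ^ 2 := by rw [inv_lt_comm₀ hm0 (by positivity)]; exact hm
  nlinarith [norm_nonneg (x * e)]

theorem eq_of_mul_star_sub_eq {x y : A} (h : x * star (x - y) = y * star (x - y)) : x = y := by
  rw [← sub_eq_zero, ← CStarRing.mul_star_self_eq_zero_iff, sub_mul, h, sub_self]

namespace IsClosedIdeal

variable {J : Set A}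

theorem mem_of_star_mul_self_mem (hJ : IsClosedIdeal J) {x : A} (hx : star x * x ∈ J) :
    x ∈ J := by
  rw [← hJ.isClosed.closure_eq, Metric.mem_closure_iff]
  intro ε hε
  obtain ⟨c, hc⟩ := exists_norm_sub_mul_star_mul_self_mul_lt x hε
  exact ⟨_, hJ.mul_mem_right c _ (hJ.mul_mem_left x _ hx), by rwa [dist_eq_norm]⟩

theorem star_mem (hJ : IsClosedIdeal J) {a : A} (ha : a ∈ J) : star a ∈ J :=
  hJ.mem_of_star_mul_self_mem (by rw [star_star]; exact hJ.mul_mem_right _ _ ha)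

theorem mem_of_star_mul_self_eq (hJ : IsClosedIdeal J) {x d : A} (hd : d ∈ J)
    (h : star x * x = star d * d) : x ∈ J :=
  hJ.mem_of_star_mul_self_mem (h ▸ hJ.mul_mem_left _ _ hd)

theorem mem_of_mul_star_self_eq (hJ : IsClosedIdeal J) {x d : A} (hd : d ∈ J)
    (h : x * star x = d * star d) : x ∈ J := by
  simpa using hJ.star_mem (hJ.mem_of_star_mul_self_eq (hJ.star_mem hd) (x := star x)
    (by simpa using h))

theorem eq_of_forall_mul_eq (hJ : IsClosedIdeal J) {x y : A} (hx : x ∈ J) (hy : y ∈ J)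
    (h : ∀ b ∈ J, x * b = y * b) : x = y :=
  eq_of_mul_star_sub_eq (h _ (hJ.star_mem (hJ.sub_mem x hx y hy)))

end IsClosedIdeal

namespace UnitaryMultiplier

variable {I : Set A} (M : UnitaryMultiplier A I)

theorem star_r' (hI : IsClosedIdeal I) {a : A} (ha : a ∈ I) : star (M.r' a) = M.l (star a) := by
  have h := M.star_l (star a) (hI.star_mem ha)
  rw [star_star] at h
  rw [← h, star_star]

theorem star_l_mul_l (hI : IsClosedIdeal I) {a : A} (ha : a ∈ I) :
    star (M.l a) * M.l a = star a * a := by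
  rw [M.star_l a ha, ← M.central' _ (hI.star_mem ha) _ (M.maps_mem a ha).1, (M.unitary_l a ha).2]

theorem r_mul_star_r (hI : IsClosedIdeal I) {a : A} (ha : a ∈ I) :
    M.r a * star (M.r a) = a * star a := by
  rw [M.star_r a ha, M.central' _ (M.maps_mem a ha).2.1 _ (hI.star_mem ha), (M.unitary_r a ha).2]

theorem r'_mul_star_r' (hI : IsClosedIdeal I) {a : A} (ha : a ∈ I) :
    M.r' a * star (M.r' a) = a * star a := by
  rw [M.star_r' hI ha, M.central _ (M.maps_mem a ha).2.2.2 _ (hI.star_mem ha),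
    (M.unitary_r a ha).1]

variable {J : Set A}

theorem l_mem_of_mem (hI : IsClosedIdeal I) (hJ : IsClosedIdeal J) {a : A} (haI : a ∈ I)
    (haJ : a ∈ J) : M.l a ∈ J :=
  hJ.mem_of_star_mul_self_eq haJ (M.star_l_mul_l hI haI)

theorem r_mem_of_mem (hI : IsClosedIdeal I) (hJ : IsClosedIdeal J) {a : A} (haI : a ∈ I)
    (haJ : a ∈ J) : M.r a ∈ J :=
  hJ.mem_of_mul_star_self_eq haJ (M.r_mul_star_r hI haI)

theorem r'_mem_of_mem (hI : IsClosedIdeal I) (hJ : IsClosedIdeal J) {a : A} (haI : a ∈ I)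
    (haJ : a ∈ J) : M.r' a ∈ J :=
  hJ.mem_of_mul_star_self_eq haJ (M.r'_mul_star_r' hI haI)

theorem map_r'_comm (hI : IsClosedIdeal I) {L : A → A} (hL_mem : ∀ a ∈ I, L a ∈ I)
    (hL_mul : ∀ a ∈ I, ∀ b, L (a * b) = L a * b) {q : A} (hq : q ∈ I) :
    L (M.r' q) = M.r' (L q) := by
  have hr'q := (M.maps_mem q hq).2.2.2
  refine hI.eq_of_forall_mul_eq (hL_mem _ hr'q) (M.maps_mem _ (hL_mem q hq)).2.2.2 fun b hb => ?_
  calc L (M.r' q) * b = L (M.r' q * b) := (hL_mul _ hr'q b).symm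
    _ = L (q * M.l' b) := by rw [M.central' q hq b hb]
    _ = L q * M.l' b := hL_mul q hq _
    _ = M.r' (L q) * b := M.central' _ (hL_mem q hq) b hb

end UnitaryMultiplier

end CStarAlgebra

namespace TwistedAction

variable {S A : Type*} [InverseMonoid S] [CStarAlgebra A] (T : TwistedAction S A)

theorem isClosedIdeal (s : S) : IsClosedIdeal (T.ideal s) := by
  obtain ⟨J, hJ⟩ := T.ideal_submodule s
  refine ⟨T.ideal_closed s, ?_, T.ideal_mul_left s, T.ideal_mul_right s⟩
  rw [← hJ]
  exact fun a ha b hb => J.sub_mem ha hb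

theorem β_mem {s : S} {a : A} (ha : a ∈ T.ideal (star s)) : T.β s a ∈ T.ideal s :=
  (T.β_bij s).mapsTo ha

theorem ideal_mul_subset (s t : S) : T.ideal (s * t) ⊆ T.ideal s := by
  rw [← T.β_ideal_img s t]
  rintro _ ⟨a, ⟨ha, -⟩, rfl⟩
  exact T.β_mem ha

end TwistedAction

theorem Submodule.topologicalClosure_span_eq_top {R M : Type*} [Semiring R] [AddCommMonoid M]
    [Module R M] [TopologicalSpace M] [ContinuousAdd M] [ContinuousConstSMul R M] {s : Set M}
    (hs : ∀ x, x ∈ s) : (Submodule.span R s).topologicalClosure = ⊤ := by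
  rw [Set.eq_univ_of_forall hs, Submodule.span_univ]
  exact top_unique (Submodule.le_topologicalClosure ⊤)

def standardBimodule (A : Type*) [CStarAlgebra A] : HilbertBimodule A A A where
  right :=
    { smul := (· * ·)
      add_smul' := add_mul
      smul_add' := mul_add
      smul_assoc' := mul_assoc
      smul_comm_left := smul_mul_assoc
      smul_comm_right := mul_smul_comm
      inner := fun x y => star x * y
      inner_add_right := fun x => mul_add (star x)
      inner_smulC_right := fun l x => mul_smul_comm l (star x)
      inner_smul_right := fun x y b => (mul_assoc (star x) y b).symm
      inner_star := fun x y => by rw [star_mul, star_star]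
      inner_self_nonneg := fun x => ⟨x, rfl⟩
      inner_self_eq_zero := fun x => (CStarRing.star_mul_self_eq_zero_iff x).mp }
  lsmul := (· * ·)
  lsmul_add := mul_add
  add_lsmul := add_mul
  lsmul_assoc := fun a b x => (mul_assoc a b x).symm
  lsmul_comm_left := smul_mul_assoc
  lsmul_comm_right := mul_smul_comm
  linner := fun x y => x * star y
  linner_add_left := fun x y z => add_mul x y (star z)
  linner_smulC_left := fun l x y => smul_mul_assoc l x (star y)
  linner_lsmul_left := fun a x y => mul_assoc a x (star y)
  linner_star := fun x y => by rw [star_mul, star_star]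
  linner_self_nonneg := fun x => ⟨x, rfl⟩
  linner_self_eq_zero := fun x => (CStarRing.mul_star_self_eq_zero_iff x).mp
  bimodule := mul_assoc
  compat := fun x y z => mul_assoc x (star y) z

namespace ExteriorEquivalence

variable {S A : Type*} [InverseMonoid S] [CStarAlgebra A] {TA TB : TwistedAction S A}
  (E : ExteriorEquivalence S A TA TB)

def φ (s : S) (a : A) : A :=
  (E.V s).r' (TA.β s a)

variable {s t : S}

theorem φ_mem {a : A} (ha : a ∈ TA.ideal (star s)) : E.φ s a ∈ TA.ideal s :=
  ((E.V s).maps_mem _ (TA.β_mem ha)).2.2.2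

theorem φ_bijOn (s : S) : Set.BijOn (E.φ s) (TA.ideal (star s)) (TA.ideal s) := by
  refine ⟨fun a ha => E.φ_mem ha, fun a ha b hb hab => (TA.β_bij s).injOn ha hb ?_, ?_⟩
  · have h := congrArg (E.V s).r hab
    rwa [φ, φ, ((E.V s).unitary_r _ (TA.β_mem ha)).1, ((E.V s).unitary_r _ (TA.β_mem hb)).1] at h
  · intro c hc
    obtain ⟨a, ha, hac⟩ := (TA.β_bij s).surjOn ((E.V s).maps_mem c hc).2.1
    exact ⟨a, ha, by rw [φ, hac, ((E.V s).unitary_r c hc).2]⟩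

theorem φ_add {x y : A} (hx : x ∈ TA.ideal (star s)) (hy : y ∈ TA.ideal (star s)) :
    E.φ s (x + y) = E.φ s x + E.φ s y := by
  rw [φ, TA.β_add s x hx y hy]
  exact ((E.V s).map_add _ (TA.β_mem hx) _ (TA.β_mem hy)).2.2.2

theorem φ_smul (c : ℂ) {x : A} (hx : x ∈ TA.ideal (star s)) : E.φ s (c • x) = c • E.φ s x := by
  rw [φ, TA.β_smul s c x hx]
  exact ((E.V s).map_smul c _ (TA.β_mem hx)).2.2.2

theorem φ_mul_left {a x : A} (ha : a ∈ TA.ideal (star s)) (hx : x ∈ TA.ideal (star s)) :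
    E.φ s (a * x) = TA.β s a * E.φ s x := by
  rw [φ, TA.β_mul s a ha x hx]
  exact (E.V s).r'_mul _ _ (TA.β_mem hx)

theorem φ_mul_right {x b : A} (hx : x ∈ TA.ideal (star s)) (hb : b ∈ TA.ideal (star s)) :
    E.φ s (x * b) = E.φ s x * TB.β s b := by
  rw [φ, φ, TA.β_mul s x hx b hb, (E.V s).r'_mul _ _ (TA.β_mem hb), E.beta_eq s b hb,
    (E.V s).central _ ((E.V s).maps_mem _ (TA.β_mem hx)).2.2.2 _
      ((E.V s).maps_mem _ (TA.β_mem hb)).2.2.2,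
    ((E.V s).unitary_r _ (TA.β_mem hx)).1]

theorem β_mul_star {x y : A} (hx : x ∈ TA.ideal (star s)) (hy : y ∈ TA.ideal (star s)) :
    TA.β s (x * star y) = E.φ s x * star (E.φ s y) := by
  rw [φ, φ, (E.V s).star_r' (TA.isClosedIdeal s) (TA.β_mem hy),
    (E.V s).central _ ((E.V s).maps_mem _ (TA.β_mem hx)).2.2.2 _
      ((TA.isClosedIdeal s).star_mem (TA.β_mem hy)),
    ((E.V s).unitary_r _ (TA.β_mem hx)).1,
    TA.β_mul s x hx _ ((TA.isClosedIdeal _).star_mem hy), TA.β_star s y hy]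

theorem β_star_mul {x y : A} (hx : x ∈ TA.ideal (star s)) (hy : y ∈ TA.ideal (star s)) :
    TB.β s (star x * y) = star (E.φ s x) * E.φ s y := by
  have hxs := (TA.isClosedIdeal _).star_mem hx
  rw [E.beta_eq s _ (TA.ideal_mul_left _ _ y hy), TA.β_mul s _ hxs y hy, TA.β_star s x hx, φ, φ,
    (E.V s).star_r' (TA.isClosedIdeal s) (TA.β_mem hx),
    ← (E.V s).l_mul _ ((TA.isClosedIdeal s).star_mem (TA.β_mem hx)),
    ← (E.V s).r'_mul _ _ (TA.β_mem hy)]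

theorem φ_mem_iff {x : A} (hx : x ∈ TA.ideal (star t)) :
    E.φ t x ∈ TA.ideal (star s) ↔ x ∈ TA.ideal (star (s * t)) := by
  have hβx := TA.β_mem hx
  rw [← TA.β_comp_mem s t x hx]
  constructor
  · intro h
    have h' := (E.V t).r_mem_of_mem (TA.isClosedIdeal t) (TA.isClosedIdeal _) (E.φ_mem hx) h
    rwa [φ, ((E.V t).unitary_r _ hβx).1] at h'
  · exact (E.V t).r'_mem_of_mem (TA.isClosedIdeal t) (TA.isClosedIdeal _) hβx

theorem mV_mem_mul {a : A} (ha : a ∈ TA.ideal (s * t)) : E.mV s t a ∈ TA.ideal (s * t) := by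
  rw [← TA.β_ideal_img s t] at ha ⊢
  obtain ⟨a, ⟨has, hat⟩, rfl⟩ := ha
  rw [E.mV_spec s t a ⟨has, hat⟩]
  exact ⟨(E.V t).l a, ⟨(E.V t).l_mem_of_mem (TA.isClosedIdeal t) (TA.isClosedIdeal _) hat has,
    ((E.V t).maps_mem a hat).1⟩, rfl⟩

/- `mV` and `w_eq` only describe left multiplications, so both sides of `φ_φ` are compared after
taking adjoints. -/
theorem star_φ_φ {x : A} (hx : x ∈ TA.ideal (star (s * t))) :
    star (E.φ s (E.φ t x)) =
      (TA.v s t).r' ((E.V s).l (E.mV s t ((TA.v s t).l (star (TA.β (s * t) x))))) := by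
  have hI := TA.isClosedIdeal (s * t)
  have hxt : x ∈ TA.ideal (star t) := TA.β_comp_dom s t x hx
  have hβx : TA.β t x ∈ TA.ideal (star s) := (TA.β_comp_mem s t x hxt).mpr hx
  have hφx : E.φ t x ∈ TA.ideal (star s) := (E.φ_mem_iff hxt).mpr hx
  have hz : star (TA.β (s * t) x) ∈ TA.ideal (s * t) := hI.star_mem (TA.β_mem hx)
  have hsub := TA.ideal_mul_subset s t
  calc star (E.φ s (E.φ t x))
      = (E.V s).l (TA.β s ((E.V t).l (star (TA.β t x)))) := by
        rw [φ, (E.V s).star_r' (TA.isClosedIdeal s) (TA.β_mem hφx), ← TA.β_star s _ hφx, φ,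
          (E.V t).star_r' (TA.isClosedIdeal t) (TA.β_mem hxt)]
    _ = (E.V s).l (E.mV s t ((TA.v s t).l ((TA.v s t).r' (star (TA.β (s * t) x))))) := by
        rw [← E.mV_spec s t _ ⟨(TA.isClosedIdeal _).star_mem hβx,
            (TA.isClosedIdeal t).star_mem (TA.β_mem hxt)⟩,
          ← TA.β_star t x hxt, TA.β_comp s t _ ((TA.isClosedIdeal _).star_mem hx),
          TA.β_star (s * t) x hx]
    _ = (TA.v s t).r' ((E.V s).l (E.mV s t ((TA.v s t).l (star (TA.β (s * t) x))))) := by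
        rw [(TA.v s t).map_r'_comm hI (fun a ha => ((TA.v s t).maps_mem a ha).1)
            (TA.v s t).l_mul hz,
          (TA.v s t).map_r'_comm hI (fun a ha => E.mV_mem_mul ha)
            (fun a ha => E.mV_mod s t a (hsub ha)) ((TA.v s t).maps_mem _ hz).1,
          (TA.v s t).map_r'_comm hI
            (fun a ha => (E.V s).l_mem_of_mem (TA.isClosedIdeal s) hI (hsub ha) ha)
            (fun a ha => (E.V s).l_mul a (hsub ha)) (E.mV_mem_mul ((TA.v s t).maps_mem _ hz).1)]

theorem star_v_l_v_r'_φ {x : A} (hx : x ∈ TA.ideal (star (s * t))) :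
    star ((TA.v s t).l ((TB.v s t).r' (E.φ (s * t) x))) =
      (TA.v s t).r' ((E.V s).l (E.mV s t ((TA.v s t).l (star (TA.β (s * t) x))))) := by
  have hβx := TA.β_mem hx
  have hφx : E.φ (s * t) x ∈ TB.ideal (s * t) := E.ideal_eq _ ▸ E.φ_mem hx
  have hz := (TA.isClosedIdeal (s * t)).star_mem hβx
  rw [(TA.v s t).star_l _ (E.ideal_eq _ ▸ ((TB.v s t).maps_mem _ hφx).2.2.2),
    (TB.v s t).star_r' (TB.isClosedIdeal _) hφx, φ,
    (E.V (s * t)).star_r' (TA.isClosedIdeal _) hβx,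
    E.w_eq s t _ ((E.V (s * t)).maps_mem _ hz).1, ((E.V (s * t)).unitary_l _ hz).2]

theorem φ_φ {x : A} (hx : x ∈ TA.ideal (star (s * t))) :
    E.φ s (E.φ t x) = (TA.v s t).l ((TB.v s t).r' (E.φ (s * t) x)) :=
  star_injective (by rw [E.star_φ_φ hx, E.star_v_l_v_r'_φ hx])

def toMoritaEquivalence : BSMoritaEquivalence S TA TB A where
  bim := standardBimodule A
  norm_right x := by
    change ‖x‖ = Real.sqrt ‖star x * x‖
    rw [CStarRing.norm_star_mul_self, Real.sqrt_mul_self (norm_nonneg x)]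
  full_left := Submodule.topologicalClosure_span_eq_top fun a => ⟨a, 1, by simp [standardBimodule]⟩
  full_right := Submodule.topologicalClosure_span_eq_top fun a => ⟨1, a, by simp [standardBimodule]⟩
  Xs := TA.ideal
  Xs_left s := Set.ext fun z =>
    ⟨fun hz => ⟨z, hz, 1, (mul_one z).symm⟩, fun ⟨a, ha, x, hz⟩ => hz ▸ TA.ideal_mul_right s x a ha⟩
  Xs_right s := Set.ext fun z => by
    rw [E.ideal_eq]
    exact ⟨fun hz => ⟨z, hz, 1, (one_mul z).symm⟩,
      fun ⟨b, hb, x, hz⟩ => hz ▸ TA.ideal_mul_left s x b hb⟩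
  φ := E.φ
  φ_bij := E.φ_bijOn
  φ_add s x hx y hy := E.φ_add hx hy
  φ_smulC s c x hx := E.φ_smul c hx
  φ_lsmul s a ha x hx := E.φ_mul_left ha hx
  φ_rsmul s b hb x hx := E.φ_mul_right hx (E.ideal_eq _ ▸ hb)
  φ_linner s x hx y hy := E.β_mul_star hx hy
  φ_rinner s x hx y hy := E.β_star_mul hx hy
  uact s t := (TA.v s t).l
  uact_spec s t a ha x := (TA.v s t).l_mul a ha x
  vact' s t := (TB.v s t).r'
  vact'_spec s t b hb x := (TB.v s t).r'_mul x b hb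
  comp_mem s t x hx := E.φ_mem_iff hx
  comp_dom s t x hx := TA.β_comp_dom s t x hx
  comp s t x hx := E.φ_φ hx

end ExteriorEquivalence

/-- If the Busby–Smith twisted actions `(A,S,α,u)` and `(A,S,β,w)` are
exterior equivalent via unitary multipliers `V_s`, then they are Morita
equivalent: the maps `φ_s(a) = α_s(a)·V_s*` on the standard `A`–`A`
imprimitivity bimodule implement a Morita equivalence. -/
theorem exterior_equiv_implies_morita {S A : Type*} [InverseMonoid S]
    [CStarAlgebra A] (TA TB : TwistedAction S A)
    (E : ExteriorEquivalence S A TA TB) :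
    ∃ M : BSMoritaEquivalence S TA TB A,
      (∀ a x : A, M.bim.lsmul a x = a * x) ∧
      (∀ x b : A, M.bim.right.smul x b = x * b) ∧
      (∀ x y : A, M.bim.linner x y = x * star y) ∧
      (∀ x y : A, M.bim.right.inner x y = star x * y) ∧
      (∀ s, ∀ a ∈ TA.ideal (star s), M.φ s a = (E.V s).r' (TA.β s a)) :=
  ⟨E.toMoritaEquivalence, fun _ _ => rfl, fun _ _ => rfl, fun _ _ => rfl, fun _ _ => rfl,
    fun _ _ _ => rfl⟩
end

section
/- Let _AX_B be an imprimitivity bimodule, π a nondegenerate representation of B on H, and π^X the induced representation of A on H^X = X ⊗_B H. Then for any closed ideal I of A, π^X(I)H^X = (I·X) ⊗_B H. -/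
/-! Since `π^X(a)(x ⊗ ξ) = (a·x) ⊗ ξ`, the vectors `(a·x) ⊗ ξ` lie in `π^X(I)H^X`; conversely
`π^X(a)` is continuous and the elementary tensors `x ⊗ ξ` have dense span in `H^X`, so
`π^X(a)` maps all of `H^X` into the closed span of the `(a·x) ⊗ ξ`. -/

theorem ContinuousLinearMap.apply_mem_of_span_dense {R E F : Type*} [Semiring R]
    [AddCommMonoid E] [TopologicalSpace E] [Module R E] [ContinuousAdd E]
    [ContinuousConstSMul R E] [AddCommMonoid F] [TopologicalSpace F] [Module R F]
    (f : E →L[R] F) {s : Set E} (hs : (Submodule.span R s).topologicalClosure = ⊤)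
    {T : Submodule R F} (hT : IsClosed (T : Set F)) (hsT : ∀ x ∈ s, f x ∈ T) (k : E) :
    f k ∈ T := by
  have hspan : Submodule.span R s ≤ T.comap (f : E →ₗ[R] F) := Submodule.span_le.mpr hsT
  have hclosure := Submodule.topologicalClosure_minimal _ hspan (hT.preimage f.continuous)
  rw [hs] at hclosure
  exact hclosure Submodule.mem_top

theorem induced_rep_ideal_image_general {A B X H HX : Type*}
    [CStarAlgebra A] [CStarAlgebra B]
    [NormedAddCommGroup X] [NormedSpace ℂ X]
    [NormedAddCommGroup HX] [InnerProductSpace ℂ HX]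
    (bim : HilbertBimodule A B X)
    -- `HX` realizes `X ⊗_B H`
    (t : X → H → HX)
    (t_dense : (Submodule.span ℂ {h : HX | ∃ x ξ, h = t x ξ}).topologicalClosure = ⊤)
    -- the induced representation `π^X` of `A` on `HX`
    (πX : A → HX →L[ℂ] HX)
    (πX_spec : ∀ a x ξ, πX a (t x ξ) = t (bim.lsmul a x) ξ)
    -- a closed ideal `I` of `A`
    (I : Set A) :
    (Submodule.span ℂ {h : HX | ∃ a ∈ I, ∃ k, h = πX a k}).topologicalClosure
      = (Submodule.span ℂ {h : HX | ∃ a ∈ I, ∃ x ξ, h = t (bim.lsmul a x) ξ}).topologicalClosure := by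
  apply le_antisymm
  · refine Submodule.topologicalClosure_minimal _ (Submodule.span_le.mpr ?_)
      (Submodule.isClosed_topologicalClosure _)
    rintro _ ⟨a, ha, k, rfl⟩
    refine (πX a).apply_mem_of_span_dense t_dense (Submodule.isClosed_topologicalClosure _) ?_ k
    rintro _ ⟨x, ξ, rfl⟩
    rw [πX_spec]
    exact Submodule.le_topologicalClosure _ (Submodule.subset_span ⟨a, ha, x, ξ, rfl⟩)
  · refine Submodule.topologicalClosure_mono (Submodule.span_mono ?_)
    rintro _ ⟨a, ha, x, ξ, rfl⟩
    exact ⟨a, ha, t x ξ, (πX_spec a x ξ).symm⟩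

/-- Rieffel induction: let `_AX_B` be an imprimitivity bimodule, `π` a
nondegenerate representation of `B` on `H`, and `π^X` the induced
representation of `A` on `H^X = X ⊗_B H` (realized as a Hilbert space `HX`
with a bilinear map `t x ξ = x ⊗ ξ` of dense span satisfying
`⟪x⊗ξ, y⊗η⟫ = ⟪ξ, π(⟨x,y⟩_B)η⟫` and `π^X(a)(x⊗ξ) = (a·x)⊗ξ`).  Then for any
closed ideal `I` of `A`, `π^X(I)H^X = (I·X) ⊗_B H`. -/
theorem induced_rep_ideal_image {A B X H HX : Type*}
    [CStarAlgebra A] [CStarAlgebra B]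
    [NormedAddCommGroup X] [NormedSpace ℂ X] [CompleteSpace X]
    [NormedAddCommGroup H] [InnerProductSpace ℂ H] [CompleteSpace H]
    [NormedAddCommGroup HX] [InnerProductSpace ℂ HX] [CompleteSpace HX]
    (bim : HilbertBimodule A B X)
    (hnorm : ∀ x : X, ‖x‖ = Real.sqrt ‖bim.right.inner x x‖)
    (hfull_left : (Submodule.span ℂ {a : A | ∃ x y : X, a = bim.linner x y}).topologicalClosure = ⊤)
    (hfull_right : (Submodule.span ℂ {b : B | ∃ x y : X, b = bim.right.inner x y}).topologicalClosure = ⊤)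
    -- `π` is a nondegenerate representation of `B` on `H`
    (π : B → H →L[ℂ] H)
    (π_add : ∀ b c, π (b + c) = π b + π c)
    (π_smul : ∀ (l : ℂ) b, π (l • b) = l • π b)
    (π_mul : ∀ b c, π (b * c) = (π b).comp (π c))
    (π_star : ∀ b, π (star b) = ContinuousLinearMap.adjoint (π b))
    (π_nondeg : (Submodule.span ℂ {ξ : H | ∃ b η, ξ = π b η}).topologicalClosure = ⊤)
    -- `HX` realizes `X ⊗_B H`
    (t : X → H → HX)
    (t_add_left : ∀ x y ξ, t (x + y) ξ = t x ξ + t y ξ)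
    (t_add_right : ∀ x ξ η, t x (ξ + η) = t x ξ + t x η)
    (t_smulC : ∀ (l : ℂ) x ξ, t (l • x) ξ = l • t x ξ ∧ t x (l • ξ) = l • t x ξ)
    (t_inner : ∀ x y ξ η, (inner ℂ (t x ξ) (t y η) : ℂ) = inner ℂ ξ (π (bim.right.inner x y) η))
    (t_dense : (Submodule.span ℂ {h : HX | ∃ x ξ, h = t x ξ}).topologicalClosure = ⊤)
    -- the induced representation `π^X` of `A` on `HX`
    (πX : A → HX →L[ℂ] HX)
    (πX_spec : ∀ a x ξ, πX a (t x ξ) = t (bim.lsmul a x) ξ)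
    -- a closed ideal `I` of `A`
    (I : Set A) (hI : ∃ J : Submodule ℂ A, (J : Set A) = I) (hIclosed : IsClosed I)
    (hIl : ∀ (a : A), ∀ b ∈ I, a * b ∈ I) (hIr : ∀ (b : A), ∀ a ∈ I, a * b ∈ I) :
    (Submodule.span ℂ {h : HX | ∃ a ∈ I, ∃ k, h = πX a k}).topologicalClosure
      = (Submodule.span ℂ {h : HX | ∃ a ∈ I, ∃ x ξ, h = t (bim.lsmul a x) ξ}).topologicalClosure :=
  induced_rep_ideal_image_general bim t t_dense πX πX_spec I
end
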